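/- arXiv:1509.04865 — 7 statements merged into one kernel-verified Lean document; each statement's English description precedes it below -/
import Mathlib

section
/- Let ψ : ℝᵖ ⊇ 𝔠 → ℝᵐ be a continuous injective map on a compact set 𝔠. Then there exists a class-𝒦 function α : ℝ≥0 → ℝ≥0 (continuous, strictly increasing, α(0)=0) such that for all a, b in 𝔠, |a − b| ≤ α(|ψ(a) − ψ(b)|). -/
open intervalIntegral MeasureTheory

section Aux

variable {p m : ℕ} {c : Set (EuclideanSpace ℝ (Fin p))}
  {ψ : EuclideanSpace ℝ (Fin p) → EuclideanSpace ℝ (Fin m)}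

/-- Uniform continuity of the inverse of a continuous injective map on a compact set. -/
lemma key_unif (hc : IsCompact c) (hcont : ContinuousOn ψ c) (hinj : Set.InjOn ψ c) :
    ∀ ε > 0, ∃ δ > 0, ∀ a ∈ c, ∀ b ∈ c, ‖ψ a - ψ b‖ < δ → ‖a - b‖ < ε := by
  have hK : CompactSpace c := isCompact_iff_compactSpace.mp hc
  set f : c → EuclideanSpace ℝ (Fin m) := fun x => ψ x with hfdef
  have hf : Continuous f := hcont.restrict
  have hfi : Function.Injective f := fun x y hxy => Subtype.ext (hinj x.2 y.2 hxy)
  set e : c ≃ Set.range f := Equiv.ofInjective f hfi with hedef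
  have he : Continuous (e : c → Set.range f) := hf.subtype_mk _
  let h : c ≃ₜ Set.range f := Continuous.homeoOfEquivCompactToT2 he
  have hcr : CompactSpace (Set.range f) := isCompact_iff_compactSpace.mp (isCompact_range hf)
  have hu : UniformContinuous (h.symm : Set.range f → c) :=
    CompactSpace.uniformContinuous_of_continuous h.symm.continuous
  intro ε hε
  obtain ⟨δ, hδ, hδ'⟩ := Metric.uniformContinuous_iff.mp hu ε hε
  refine ⟨δ, hδ, fun a ha b hb hab => ?_⟩
  have h1 : dist (e ⟨a, ha⟩) (e ⟨b, hb⟩) < δ := by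
    rw [Subtype.dist_eq]
    simpa [hedef, dist_eq_norm] using hab
  have h2 := hδ' h1
  have hsymm : ∀ x : c, h.symm (e x) = x := fun x => h.symm_apply_apply x
  rw [hsymm, hsymm, Subtype.dist_eq, dist_eq_norm] at h2
  exact h2

end Aux

/-- A continuous injective map on a compact subset of ℝᵖ admits a
class-𝒦 modulus of injectivity. -/
theorem stmt_0 (p m : ℕ) (c : Set (EuclideanSpace ℝ (Fin p))) (hc : IsCompact c)
    (ψ : EuclideanSpace ℝ (Fin p) → EuclideanSpace ℝ (Fin m))
    (hcont : ContinuousOn ψ c) (hinj : Set.InjOn ψ c) :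
    ∃ α : ℝ → ℝ, Continuous α ∧ StrictMonoOn α (Set.Ici 0) ∧ α 0 = 0 ∧
      ∀ a ∈ c, ∀ b ∈ c, ‖a - b‖ ≤ α ‖ψ a - ψ b‖ := by
  have key := key_unif hc hcont hinj
  -- the modulus ω
  set S : ℝ → Set ℝ := fun r =>
    {x | x = 0 ∨ ∃ a ∈ c, ∃ b ∈ c, ‖ψ a - ψ b‖ ≤ r ∧ x = ‖a - b‖} with hSdef
  set ω : ℝ → ℝ := fun r => sSup (S r) with hωdef
  have hzeroS : ∀ r, (0:ℝ) ∈ S r := fun r => Or.inl rfl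
  have hbdd : ∀ r, BddAbove (S r) := by
    intro r
    refine ⟨max (Metric.diam c) 0, fun x hx => ?_⟩
    rcases hx with rfl | ⟨a, ha, b, hb, _, rfl⟩
    · exact le_max_right _ _
    · refine le_trans ?_ (le_max_left _ _)
      rw [← dist_eq_norm]
      exact Metric.dist_le_diam_of_mem hc.isBounded ha hb
  have hω_nonneg : ∀ r, 0 ≤ ω r := fun r => le_csSup (hbdd r) (hzeroS r)
  have hω_mono : Monotone ω := by
    intro r s hrs
    refine csSup_le_csSup (hbdd s) ⟨0, hzeroS r⟩ ?_
    rintro x (rfl | ⟨a, ha, b, hb, hle, rfl⟩)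
    · exact hzeroS s
    · exact Or.inr ⟨a, ha, b, hb, hle.trans hrs, rfl⟩
  have hω_le : ∀ a ∈ c, ∀ b ∈ c, ∀ r, ‖ψ a - ψ b‖ ≤ r → ‖a - b‖ ≤ ω r := by
    intro a ha b hb r hr
    exact le_csSup (hbdd r) (Or.inr ⟨a, ha, b, hb, hr, rfl⟩)
  have hω_small : ∀ ε > 0, ∃ δ > 0, ∀ r ≤ δ, ω r ≤ ε := by
    intro ε hε
    obtain ⟨δ, hδ, hδ'⟩ := key ε hε
    refine ⟨δ / 2, by linarith, fun r hr => ?_⟩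
    refine csSup_le ⟨0, hzeroS r⟩ ?_
    rintro x (rfl | ⟨a, ha, b, hb, hle, rfl⟩)
    · exact le_of_lt hε
    · exact le_of_lt (hδ' a ha b hb (by linarith))
  -- integrability
  have hωint : ∀ a b : ℝ, IntervalIntegrable ω volume a b :=
    fun a b => hω_mono.intervalIntegrable
  set F : ℝ → ℝ := fun x => ∫ t in (0:ℝ)..x, ω t with hFdef
  have hFcont : Continuous F := intervalIntegral.continuous_primitive hωint 0
  set g : ℝ → ℝ := fun r => if r ≤ 0 then 0 else (F (2 * r) - F r) / r with hgdef
  have hg0 : ∀ r ≤ 0, g r = 0 := fun r hr => if_pos hr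
  -- g r as an integral for r > 0
  have hgint : ∀ r : ℝ, 0 < r → g r = ∫ u in (1:ℝ)..2, ω (r * u) := by
    intro r hr
    have h1 : (∫ u in (1:ℝ)..2, ω (r * u)) = r⁻¹ • ∫ x in (r * 1)..(r * 2), ω x :=
      intervalIntegral.integral_comp_mul_left ω hr.ne'
    have h2 : (∫ x in (0:ℝ)..r, ω x) + ∫ x in r..2*r, ω x = ∫ x in (0:ℝ)..2*r, ω x :=
      intervalIntegral.integral_add_adjacent_intervals (hωint 0 r) (hωint r (2*r))
    have : g r = (F (2 * r) - F r) / r := if_neg (not_le.mpr hr)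
    rw [this, h1]
    rw [hFdef]
    simp only [smul_eq_mul]
    rw [mul_one r, show r * 2 = 2 * r by ring]
    rw [← h2]
    ring
  have hintble : ∀ r : ℝ, 0 ≤ r → IntervalIntegrable (fun u => ω (r * u)) volume 1 2 := by
    intro r hr
    apply MonotoneOn.intervalIntegrable
    intro x hx y hy hxy
    exact hω_mono (mul_le_mul_of_nonneg_left hxy hr)
  -- ω r ≤ g r ≤ ω (2r) for r > 0
  have hg_lower : ∀ r : ℝ, 0 < r → ω r ≤ g r := by
    intro r hr
    rw [hgint r hr]
    have : (∫ _ in (1:ℝ)..2, ω r) ≤ ∫ u in (1:ℝ)..2, ω (r * u) := by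
      refine intervalIntegral.integral_mono_on (by norm_num)
        intervalIntegrable_const (hintble r hr.le) ?_
      intro u hu
      exact hω_mono (by nlinarith [hu.1])
    simp only [intervalIntegral.integral_const, smul_eq_mul] at this
    linarith
  have hg_upper : ∀ r : ℝ, 0 < r → g r ≤ ω (2 * r) := by
    intro r hr
    rw [hgint r hr]
    have : (∫ u in (1:ℝ)..2, ω (r * u)) ≤ ∫ _ in (1:ℝ)..2, ω (2 * r) := by
      refine intervalIntegral.integral_mono_on (by norm_num)
        (hintble r hr.le) intervalIntegrable_const ?_
      intro u hu
      exact hω_mono (by nlinarith [hu.2])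
    simp only [intervalIntegral.integral_const, smul_eq_mul] at this
    linarith
  have hg_nonneg : ∀ r : ℝ, 0 ≤ g r := by
    intro r
    rcases le_or_gt r 0 with h | h
    · rw [hg0 r h]
    · exact le_trans (hω_nonneg r) (hg_lower r h)
  -- g monotone
  have hg_mono : Monotone g := by
    intro r s hrs
    rcases le_or_gt s 0 with hs | hs
    · rw [hg0 r (hrs.trans hs), hg0 s hs]
    rcases le_or_gt r 0 with hr | hr
    · rw [hg0 r hr]; exact hg_nonneg s
    rw [hgint r hr, hgint s hs]
    refine intervalIntegral.integral_mono_on (by norm_num)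
      (hintble r hr.le) (hintble s hs.le) ?_
    intro u hu
    exact hω_mono (mul_le_mul_of_nonneg_right hrs (by linarith [hu.1]))
  -- g continuous
  have hg_cont : Continuous g := by
    rw [continuous_iff_continuousAt]
    intro r
    rcases lt_trichotomy r 0 with hr | hr | hr
    · have : g =ᶠ[nhds r] fun _ => 0 := by
        filter_upwards [eventually_lt_nhds hr] with x hx
        exact hg0 x hx.le
      exact ContinuousAt.congr (continuousAt_const) this.symm
    · -- continuity at 0
      subst hr
      rw [ContinuousAt, Metric.tendsto_nhds]
      intro ε hε
      obtain ⟨δ, hδ, hδ'⟩ := hω_small (ε / 2) (by linarith)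
      filter_upwards [Metric.ball_mem_nhds 0 (show (0:ℝ) < δ/2 by linarith)] with x hx
      rw [Metric.mem_ball, Real.dist_eq, sub_zero] at hx
      have hgx : g x ≤ ε / 2 := by
        rcases le_or_gt x 0 with h | h
        · rw [hg0 x h]; linarith
        · refine le_trans (hg_upper x h) (hδ' (2 * x) ?_)
          rw [abs_lt] at hx; linarith
      have h0 : g 0 = 0 := hg0 0 le_rfl
      rw [h0, Real.dist_eq, sub_zero, abs_of_nonneg (hg_nonneg x)]
      linarith
    · have heq : g =ᶠ[nhds r] (fun x => (F (2 * x) - F x) / x) := by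
        filter_upwards [eventually_gt_nhds hr] with x hx
        exact if_neg (not_le.mpr hx)
      have hca : ContinuousAt (fun x => (F (2 * x) - F x) / x) r :=
        (((hFcont.comp (continuous_const.mul continuous_id)).sub hFcont).continuousAt).div
          continuousAt_id hr.ne'
      exact hca.congr heq.symm
  -- assemble α
  refine ⟨fun r => r + g r, continuous_id.add hg_cont, ?_, ?_, ?_⟩
  · intro x hx y hy hxy
    have := hg_mono hxy.le
    dsimp only
    linarith
  · simp [hg0 0 le_rfl]
  · intro a ha b hb
    set r := ‖ψ a - ψ b‖ with hrdef
    have hr0 : 0 ≤ r := norm_nonneg _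
    rcases eq_or_lt_of_le hr0 with hr | hr
    · have : ψ a = ψ b := by
        have : ‖ψ a - ψ b‖ = 0 := hr.symm
        rwa [norm_eq_zero, sub_eq_zero] at this
      have hab : a = b := hinj ha hb this
      have hz : ‖a - b‖ = 0 := by simp [hab]
      have := hg_nonneg r
      rw [hz]
      show (0:ℝ) ≤ r + g r
      linarith
    · have h1 : ‖a - b‖ ≤ ω r := hω_le a ha b hb r le_rfl
      have h2 := hg_lower r hr
      dsimp only
      linarith
end

section
/- Let 𝒪 ⊆ ℝⁿ be open, Ouvs an open set with closure in 𝒪, and φ : 𝒪 → ℝᵐ a C¹ immersion. Suppose F : ℝᵐ → ℝ^{m−n} is a C² function which is a submersion on a neighborhood of φ(Ouvs) and satisfies F(φ(x)) = 0 for all x in Ouvs. Then for every x in Ouvs the m×m matrix whose first n columns are ∂φ/∂x(x) and whose last m−n columns are (∂F/∂ξ(φ(x)))ᵀ is invertible. -/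
/-!
Differentiating `F ∘ φ = 0` on the open set `Ouvs` gives `DF(φ x) ∘ Dφ(x) = 0`. If
`Dφ(x) u + DF(φ x)ᵀ v = 0`, applying `DF(φ x)` kills the first term, so `DF(φ x)ᵀ v` lies in
`ker (DF DFᵀ) = ker DFᵀ` and vanishes; then `u = 0` because `Dφ(x)` is injective and `v = 0`
because `ker DFᵀ = (range DF)ᗮ = 0`. Domain and codomain both have dimension `n + k`, so the
injective map is bijective.
-/

open Filter Topology Set Module ContinuousLinearMap

section AdjointCompletion

variable {𝕜 E F G : Type*} [RCLike 𝕜] [NormedAddCommGroup E] [NormedSpace 𝕜 E]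
  [NormedAddCommGroup F] [InnerProductSpace 𝕜 F] [CompleteSpace F]
  [NormedAddCommGroup G] [InnerProductSpace 𝕜 G] [CompleteSpace G]

theorem ContinuousLinearMap.injective_adjoint_of_surjective {A : F →L[𝕜] G}
    (hA : Function.Surjective A) : Function.Injective (adjoint A) := by
  rw [← coe_coe, ← LinearMap.ker_eq_bot, ← orthogonal_range, LinearMap.range_eq_top.mpr hA,
    Submodule.top_orthogonal_eq_bot]

theorem ContinuousLinearMap.injective_coprod_adjoint {B : E →L[𝕜] F} {A : F →L[𝕜] G}
    (hB : Function.Injective B) (hA : Function.Surjective A) (hAB : A ∘L B = 0) :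
    Function.Injective (B.coprod (adjoint A)) := by
  rw [← coe_coe, ← LinearMap.ker_eq_bot, LinearMap.ker_eq_bot']
  rintro ⟨u, v⟩ huv
  replace huv : B u + adjoint A v = 0 := huv
  have hAAv : A (adjoint A v) = 0 := by
    simpa [← comp_apply A B, hAB] using congrArg A huv
  have hAv : adjoint A v = 0 := by
    have hv : v ∈ (A ∘L adjoint A).ker := hAAv
    rwa [ker_self_comp_adjoint] at hv
  have hu : u = 0 := hB (by simpa [hAv] using huv)
  have hv : v = 0 := injective_adjoint_of_surjective hA (by simpa using hAv)
  simp [hu, hv]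

theorem ContinuousLinearMap.bijective_coprod_adjoint [FiniteDimensional 𝕜 E]
    [FiniteDimensional 𝕜 F] [FiniteDimensional 𝕜 G] {B : E →L[𝕜] F} {A : F →L[𝕜] G}
    (hB : Function.Injective B) (hA : Function.Surjective A) (hAB : A ∘L B = 0)
    (hdim : finrank 𝕜 E + finrank 𝕜 G = finrank 𝕜 F) :
    Function.Bijective (B.coprod (adjoint A)) := by
  have hinj := injective_coprod_adjoint hB hA hAB
  refine ⟨hinj, ?_⟩
  rw [← coe_coe] at hinj ⊢
  exact (LinearMap.injective_iff_surjective_of_finrank_eq_finrank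
    (by rw [finrank_prod, hdim])).mp hinj

end AdjointCompletion

theorem fderiv_comp_eq_zero_of_eventually_eq_zero {𝕜 E F G : Type*}
    [NontriviallyNormedField 𝕜] [NormedAddCommGroup E] [NormedSpace 𝕜 E]
    [NormedAddCommGroup F] [NormedSpace 𝕜 F]
    [NormedAddCommGroup G] [NormedSpace 𝕜 G] {f : E → F} {g : F → G} {x : E}
    (hg : DifferentiableAt 𝕜 g (f x)) (hf : DifferentiableAt 𝕜 f x)
    (h : ∀ᶠ y in 𝓝 x, g (f y) = 0) :
    fderiv 𝕜 g (f x) ∘L fderiv 𝕜 f x = 0 :=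
  (hg.hasFDerivAt.comp x hf.hasFDerivAt).unique
    ((hasFDerivAt_const 0 x).congr_of_eventuallyEq h)

theorem stmt_2_general (n k : ℕ) (𝒪 : Set (EuclideanSpace ℝ (Fin n)))
    (Ouvs : Set (EuclideanSpace ℝ (Fin n))) (hOuvsOpen : IsOpen Ouvs)
    (hOuvsCl : closure Ouvs ⊆ 𝒪)
    (φ : EuclideanSpace ℝ (Fin n) → EuclideanSpace ℝ (Fin (n + k)))
    (hφ : ContDiffOn ℝ 1 φ 𝒪)
    (hφimm : ∀ x ∈ 𝒪, Function.Injective (fderiv ℝ φ x))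
    (F : EuclideanSpace ℝ (Fin (n + k)) → EuclideanSpace ℝ (Fin k))
    (hF : ContDiff ℝ 2 F)
    (U : Set (EuclideanSpace ℝ (Fin (n + k)))) (hUim : φ '' Ouvs ⊆ U)
    (hFsub : ∀ ξ ∈ U, Function.Surjective (fderiv ℝ F ξ))
    (hF0 : ∀ x ∈ Ouvs, F (φ x) = 0) :
    ∀ x ∈ Ouvs,
      Function.Bijective
        (fun uv : EuclideanSpace ℝ (Fin n) × EuclideanSpace ℝ (Fin k) =>
          fderiv ℝ φ x uv.1 + ContinuousLinearMap.adjoint (fderiv ℝ F (φ x)) uv.2) := by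
  intro x hx
  have hOuvs : Ouvs ∈ 𝓝 x := hOuvsOpen.mem_nhds hx
  have h𝒪 : 𝒪 ∈ 𝓝 x := mem_of_superset hOuvs (subset_closure.trans hOuvsCl)
  have hφx : DifferentiableAt ℝ φ x := (hφ.contDiffAt h𝒪).differentiableAt one_ne_zero
  have hFφx : DifferentiableAt ℝ F (φ x) := hF.contDiffAt.differentiableAt two_ne_zero
  exact bijective_coprod_adjoint (hφimm x (mem_of_mem_nhds h𝒪))
    (hFsub _ (hUim (mem_image_of_mem φ hx)))
    (fderiv_comp_eq_zero_of_eventually_eq_zero hFφx hφx (eventually_of_mem hOuvs hF0))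
    (by simp)

/-- Completion of the Jacobian of an immersion by the transposed Jacobian
of a submersion F vanishing on the image: the resulting m×m matrix (here the linear map
(u,v) ↦ Dφ(x)u + DF(φ(x))ᵀ v) is invertible on Ouvs. -/
theorem stmt_2 (n k : ℕ) (𝒪 : Set (EuclideanSpace ℝ (Fin n))) (hO : IsOpen 𝒪)
    (Ouvs : Set (EuclideanSpace ℝ (Fin n))) (hOuvsOpen : IsOpen Ouvs)
    (hOuvsCl : closure Ouvs ⊆ 𝒪)
    (φ : EuclideanSpace ℝ (Fin n) → EuclideanSpace ℝ (Fin (n + k)))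
    (hφ : ContDiffOn ℝ 1 φ 𝒪)
    (hφimm : ∀ x ∈ 𝒪, Function.Injective (fderiv ℝ φ x))
    (F : EuclideanSpace ℝ (Fin (n + k)) → EuclideanSpace ℝ (Fin k))
    (hF : ContDiff ℝ 2 F)
    (U : Set (EuclideanSpace ℝ (Fin (n + k)))) (hU : IsOpen U) (hUim : φ '' Ouvs ⊆ U)
    (hFsub : ∀ ξ ∈ U, Function.Surjective (fderiv ℝ F ξ))
    (hF0 : ∀ x ∈ Ouvs, F (φ x) = 0) :
    ∀ x ∈ Ouvs,
      Function.Bijective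
        (fun uv : EuclideanSpace ℝ (Fin n) × EuclideanSpace ℝ (Fin k) =>
          fderiv ℝ φ x uv.1 + ContinuousLinearMap.adjoint (fderiv ℝ F (φ x)) uv.2) :=
  stmt_2_general n k 𝒪 Ouvs hOuvsOpen hOuvsCl φ hφ hφimm F hF U hUim hFsub hF0
end

section
/- For every nonzero vector z = (z₁,z₂,z₃,z₄) in ℝ⁴, the 4×4 matrix with rows (z₁, −z₂, z₃, z₄), (z₂, z₁, −z₄, z₃), (z₃, −z₄, −z₁, −z₂), (z₄, z₃, z₂, −z₁) is invertible; indeed its columns are pairwise orthogonal, each of norm |z|. -/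
open Matrix

/-!
The sign pattern makes the columns of `M` pairwise orthogonal, each of squared length
`∑ zᵢ²`, i.e. `Mᵀ * M = ‖z‖² • 1`. Taking determinants gives `(det M)² = ‖z‖⁸ ≠ 0`.
-/

section

variable {n R : Type*} [Fintype n] [DecidableEq n] [CommRing R]

theorem isUnit_det_of_transpose_mul_self_eq_smul_one (A : Matrix n n R) {c : R}
    (hc : IsUnit c) (h : Aᵀ * A = c • 1) : IsUnit A.det := by
  have hsq : IsUnit (Aᵀ * A).det := by
    rw [h, det_smul, det_one, mul_one]
    exact hc.pow _
  rw [det_mul, det_transpose] at hsq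
  exact isUnit_of_mul_isUnit_left hsq

def completionMatrix (z : Fin 4 → R) : Matrix (Fin 4) (Fin 4) R :=
  !![z 0, -z 1,  z 2,  z 3;
     z 1,  z 0, -z 3,  z 2;
     z 2, -z 3, -z 0, -z 1;
     z 3,  z 2,  z 1, -z 0]

theorem completionMatrix_transpose_mul_self (z : Fin 4 → R) :
    (completionMatrix z)ᵀ * completionMatrix z = (∑ i, z i ^ 2) • 1 := by
  ext i j
  fin_cases i <;> fin_cases j <;>
    simp [completionMatrix, mul_apply, Fin.sum_univ_four] <;> ring

end

theorem EuclideanSpace.norm_sq_eq_sum_sq {n : Type*} [Fintype n] (x : EuclideanSpace ℝ n) :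
    ‖x‖ ^ 2 = ∑ i, x i ^ 2 := by
  simp [EuclideanSpace.norm_sq_eq, Real.norm_eq_abs, sq_abs]

/-- For every nonzero z ∈ ℝ⁴ the indicated 4×4 matrix is invertible;
its columns are pairwise orthogonal, each of norm |z| (i.e. Mᵀ M = ‖z‖² I). -/
theorem stmt_5 (z : EuclideanSpace ℝ (Fin 4)) (hz : z ≠ 0) :
    let M : Matrix (Fin 4) (Fin 4) ℝ :=
      !![z 0, -z 1,  z 2,  z 3;
         z 1,  z 0, -z 3,  z 2;
         z 2, -z 3, -z 0, -z 1;
         z 3,  z 2,  z 1, -z 0]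
    IsUnit M.det ∧ Mᵀ * M = (‖z‖ ^ 2) • (1 : Matrix (Fin 4) (Fin 4) ℝ) := by
  intro M
  have horth : Mᵀ * M = (‖z‖ ^ 2) • (1 : Matrix (Fin 4) (Fin 4) ℝ) := by
    rw [EuclideanSpace.norm_sq_eq_sum_sq]
    exact completionMatrix_transpose_mul_self (fun i => z i)
  have hnorm : IsUnit (‖z‖ ^ 2) := (pow_pos (norm_pos_iff.mpr hz) 2).ne'.isUnit
  exact ⟨isUnit_det_of_transpose_mul_self_eq_smul_one M hnorm horth, horth⟩
end

section
/- Let χ be a complete C¹ vector field on ℝᵐ, and suppose V_K, V_E : ℝᵐ → ℝ≥0 are C¹ proper functions and α a class-𝒦∞ function satisfying: α(dist(z,K₀)) ≤ V_K(z) with V_K = 0 on K₀; α(dist(z,E)) ≤ V_E(z) with V_E = 0 on E; and L_χ V_K(z) ≤ −V_K(z), L_χ V_E(z) ≤ −V_E(z) for all z. Set v_E = sup{V_K(z) : dist(z,E) ≤ d̄} and μ = α(d̄)/(2 v_E) for some d̄ > 0. Then the set ℰ = {z : V_E(z) + μ V_K(z) < α(d̄)} contains closure(E), is contained in {z : dist(z,E)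 ≤ d̄}, and satisfies L_χ(V_E + μV_K)(z) < 0 on its boundary. -/
/-!
On `closure E` we have `V_E = 0` and `V_K ≤ v_E`, so the weight `μ` keeps `V_E + μ V_K ≤ α(d̄) / 2`.
Since `α(dist(z, E)) ≤ V_E + μ V_K`, the sublevel set `{V_E + μ V_K < α(d̄)}` stays within `d̄`
of `E`. On its frontier `V_E + μ V_K = α(d̄) > 0`, and the decay `L_χ W ≤ -W`, which passes to
nonnegative combinations, makes the Lie derivative negative there.
-/

open Metric Set

section SublevelSet

variable {X : Type*} [PseudoMetricSpace X]

theorem Bornology.IsBounded.isCompact_setOf_infDist_le [ProperSpace X] {E : Set X}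
    (hE : Bornology.IsBounded E) (hne : E.Nonempty) (d : ℝ) :
    IsCompact {x | infDist x E ≤ d} := by
  refine isCompact_of_isClosed_isBounded (isClosed_le (continuous_infDist_pt E) continuous_const)
    (hE.thickening (δ := d + 1) |>.subset fun x hx => ?_)
  rw [mem_thickening_iff_infDist_lt hne]
  exact hx.out.trans_lt (lt_add_one d)

theorem le_sSup_image_setOf_infDist_le [ProperSpace X] {E : Set X} {V : X → ℝ}
    (hV : Continuous V) (hE : Bornology.IsBounded E) {d : ℝ} (hd : 0 ≤ d) {z : X}
    (hz : z ∈ closure E) :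
    V z ≤ sSup (V '' {x | infDist x E ≤ d}) := by
  have hne : E.Nonempty := closure_nonempty_iff.mp ⟨z, hz⟩
  exact le_csSup ((hE.isCompact_setOf_infDist_le hne d).image hV).bddAbove
    ⟨z, (infDist_zero_of_mem_closure hz).trans_le hd, rfl⟩

theorem closure_subset_setOf_add_mul_lt [ProperSpace X] {E : Set X} (hE : Bornology.IsBounded E)
    {VE VK : X → ℝ} (hVE : Continuous VE) (hVK : Continuous VK) (hVKnn : ∀ z, 0 ≤ VK z)
    (hVE0 : ∀ z ∈ E, VE z = 0) {a d : ℝ} (ha : 0 < a) (hd : 0 ≤ d) :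
    closure E ⊆
      {z | VE z + a / (2 * sSup (VK '' {x | infDist x E ≤ d})) * VK z < a} := by
  intro z hz
  set v := sSup (VK '' {x | infDist x E ≤ d})
  have hVEz : VE z = 0 :=
    closure_minimal hVE0 (isClosed_eq hVE continuous_const) hz
  have hVKz : VK z ≤ v := le_sSup_image_setOf_infDist_le hVK hE hd hz
  have hv : 0 ≤ v := (hVKnn z).trans hVKz
  -- `μ = a / (2 v)` makes `μ V_K ≤ a / 2` on the `d`-neighbourhood; if `v = 0`, then `a / 0 = 0`.
  have hμv : a / (2 * v) * v ≤ a / 2 := by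
    rcases hv.eq_or_lt with h | h
    · simp only [← h, mul_zero, div_zero]
      positivity
    · rw [div_mul_eq_mul_div, mul_div_mul_right _ _ h.ne']
  have : a / (2 * v) * VK z ≤ a / (2 * v) * v :=
    mul_le_mul_of_nonneg_left hVKz (by positivity)
  show VE z + _ < a
  linarith

theorem setOf_lt_subset_setOf_infDist_le {E : Set X} {W : X → ℝ} {α : ℝ → ℝ}
    (hα : StrictMonoOn α (Ici 0)) (hW : ∀ z, α (infDist z E) ≤ W z) {d : ℝ} (hd : 0 ≤ d) :
    {z | W z < α d} ⊆ {z | infDist z E ≤ d} := fun z hz =>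
  ((hα.lt_iff_lt infDist_nonneg hd).mp ((hW z).trans_lt hz)).le

end SublevelSet

section LieDerivative

variable {F : Type*} [NormedAddCommGroup F] [NormedSpace ℝ F]

theorem fderiv_add_const_mul_apply_le_neg {f g : F → ℝ} {z v : F} (hf : DifferentiableAt ℝ f z)
    (hg : DifferentiableAt ℝ g z) {c : ℝ} (hc : 0 ≤ c) (hfv : fderiv ℝ f z v ≤ -f z)
    (hgv : fderiv ℝ g z v ≤ -g z) :
    fderiv ℝ (fun z => f z + c * g z) z v ≤ -(f z + c * g z) := by
  rw [fderiv_fun_add hf (hg.const_mul c), fderiv_const_mul hg]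
  simp only [add_apply, smul_apply, smul_eq_mul]
  linarith [mul_le_mul_of_nonneg_left hgv hc]

theorem fderiv_apply_neg_of_mem_frontier_setOf_lt {W : F → ℝ} (hW : Continuous W) {χ : F → F}
    (hWχ : ∀ z, fderiv ℝ W z (χ z) ≤ -W z) {a : ℝ} (ha : 0 < a) :
    ∀ z ∈ frontier {z | W z < a}, fderiv ℝ W z (χ z) < 0 := fun z hz => by
  have hWz : W z = a := frontier_lt_subset_eq hW continuous_const hz
  linarith [hWχ z]

end LieDerivative

theorem stmt_11_general (m : ℕ)
    (χ : EuclideanSpace ℝ (Fin m) → EuclideanSpace ℝ (Fin m))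
    (E : Set (EuclideanSpace ℝ (Fin m)))
    (hEb : Bornology.IsBounded E)
    (VK VE : EuclideanSpace ℝ (Fin m) → ℝ)
    (hVKC : ContDiff ℝ 1 VK) (hVEC : ContDiff ℝ 1 VE)
    (hVKnn : ∀ z, 0 ≤ VK z)
    (α : ℝ → ℝ) (hαmono : StrictMonoOn α (Set.Ici 0))
    (hα0 : α 0 = 0)
    (hVElb : ∀ z, α (Metric.infDist z E) ≤ VE z) (hVE0 : ∀ z ∈ E, VE z = 0)
    (hVKdec : ∀ z, fderiv ℝ VK z (χ z) ≤ -VK z)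
    (hVEdec : ∀ z, fderiv ℝ VE z (χ z) ≤ -VE z)
    (d : ℝ) (hd : 0 < d)
    (vE μ : ℝ) (hvE : vE = sSup (VK '' {z | Metric.infDist z E ≤ d}))
    (hμ : μ = α d / (2 * vE)) :
    closure E ⊆ {z | VE z + μ * VK z < α d} ∧
    {z | VE z + μ * VK z < α d} ⊆ {z | Metric.infDist z E ≤ d} ∧
    ∀ z ∈ frontier {z | VE z + μ * VK z < α d},
      fderiv ℝ (fun z => VE z + μ * VK z) z (χ z) < 0 := by
  have hαd : 0 < α d := hα0 ▸ hαmono self_mem_Ici hd.le hd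
  have hμnn : 0 ≤ μ := by
    rw [hμ, hvE]
    have := Real.sSup_nonneg (s := VK '' {z | infDist z E ≤ d}) (by
      rintro _ ⟨z, -, rfl⟩
      exact hVKnn z)
    positivity
  refine ⟨?_, ?_, ?_⟩
  · rw [hμ, hvE]
    exact closure_subset_setOf_add_mul_lt hEb hVEC.continuous hVKC.continuous hVKnn hVE0 hαd hd.le
  · refine setOf_lt_subset_setOf_infDist_le hαmono (fun z => ?_) hd.le
    linarith [hVElb z, mul_nonneg hμnn (hVKnn z)]
  · refine fderiv_apply_neg_of_mem_frontier_setOf_lt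
      (hVEC.continuous.add (continuous_const.mul hVKC.continuous)) (fun z => ?_) hαd
    exact fderiv_add_const_mul_apply_le_neg (hVEC.differentiable one_ne_zero z)
      (hVKC.differentiable one_ne_zero z) hμnn (hVEdec z) (hVKdec z)

/-- Lyapunov-based construction of the enlarged set ℰ: with converse
Lyapunov functions V_K, V_E decaying along χ and a class-𝒦∞ lower bound α, the set
ℰ = {V_E + μ V_K < α(d̄)} with μ = α(d̄)/(2 v_E) contains closure(E), is contained in
the d̄-neighborhood of E, and the Lie derivative of V_E + μ V_K is negative on ∂ℰ. -/
theorem stmt_11 (m : ℕ)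
    (χ : EuclideanSpace ℝ (Fin m) → EuclideanSpace ℝ (Fin m)) (hχ : ContDiff ℝ 1 χ)
    (E : Set (EuclideanSpace ℝ (Fin m))) (hEo : IsOpen E)
    (hEb : Bornology.IsBounded E)
    (K₀ : Set (EuclideanSpace ℝ (Fin m))) (hKc : IsCompact K₀) (hKE : K₀ ⊆ E)
    (VK VE : EuclideanSpace ℝ (Fin m) → ℝ)
    (hVKC : ContDiff ℝ 1 VK) (hVEC : ContDiff ℝ 1 VE)
    (hVKnn : ∀ z, 0 ≤ VK z) (hVEnn : ∀ z, 0 ≤ VE z)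
    (hVKproper : Filter.Tendsto VK (Filter.cocompact _) Filter.atTop)
    (hVEproper : Filter.Tendsto VE (Filter.cocompact _) Filter.atTop)
    (α : ℝ → ℝ) (hαc : Continuous α) (hαmono : StrictMonoOn α (Set.Ici 0))
    (hα0 : α 0 = 0) (hαtop : Filter.Tendsto α Filter.atTop Filter.atTop)
    (hVKlb : ∀ z, α (Metric.infDist z K₀) ≤ VK z) (hVK0 : ∀ z ∈ K₀, VK z = 0)
    (hVElb : ∀ z, α (Metric.infDist z E) ≤ VE z) (hVE0 : ∀ z ∈ E, VE z = 0)
    (hVKdec : ∀ z, fderiv ℝ VK z (χ z) ≤ -VK z)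
    (hVEdec : ∀ z, fderiv ℝ VE z (χ z) ≤ -VE z)
    (d : ℝ) (hd : 0 < d)
    (vE μ : ℝ) (hvE : vE = sSup (VK '' {z | Metric.infDist z E ≤ d}))
    (hμ : μ = α d / (2 * vE)) :
    closure E ⊆ {z | VE z + μ * VK z < α d} ∧
    {z | VE z + μ * VK z < α d} ⊆ {z | Metric.infDist z E ≤ d} ∧
    ∀ z ∈ frontier {z | VE z + μ * VK z < α d},
      fderiv ℝ (fun z => VE z + μ * VK z) z (χ z) < 0 :=
  stmt_11_general m χ E hEb VK VE hVKC hVEC hVKnn α hαmono hα0 hVElb hVE0 hVKdec hVEdec d hd vE μ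
    hvE hμ
end

section
/- Let ℘ : ℝ² → ℝ be a C¹ nonnegative function with ℘(x₁,x₂) > 0 whenever x₁ = x₂ = 0 (e.g. ℘(x₁,x₂) = max{0, 1/r² − (x₁²+x₂²)}⁴). Let ς ∈ ℝ and define φ : ℝ³ → ℝ⁵ by φ(x) = (x₁, x₂, −x₁x₃, −x₂x₃, ℘(x₁,x₂)(x₃−ς)). Then φ is an injective immersion on all of ℝ³: its Jacobian has rank 3 everywhere and φ is injective. -/
/-!
The first two coordinates of `φ` are `x₀, x₁`. If `φ a = φ b`, then `a` and `b` share them and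
`t = a₂ - b₂` satisfies `t x₀ = t x₁ = t ℘(x₀, x₁) = 0`; if `dφ_x v = 0`, then `v₀ = v₁ = 0` and
`t = v₂` satisfies the same equations. As `℘(0, 0) ≠ 0`, the vector `(x₀, x₁, ℘(x₀, x₁))` never
vanishes, so `t = 0` in both cases.
-/

def immersionMap (℘ : ℝ → ℝ → ℝ) (ς : ℝ) (x : EuclideanSpace ℝ (Fin 3)) :
    EuclideanSpace ℝ (Fin 5) :=
  (WithLp.equiv 2 (Fin 5 → ℝ)).symm
    ![x 0, x 1, -(x 0 * x 2), -(x 1 * x 2), ℘ (x 0) (x 1) * (x 2 - ς)]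

theorem EuclideanSpace.fderiv_apply {E ι : Type*} [Fintype ι] [NormedAddCommGroup E]
    [NormedSpace ℝ E] {f : E → EuclideanSpace ℝ ι} {x : E} (hf : DifferentiableAt ℝ f x)
    (v : E) (i : ι) : fderiv ℝ f x v i = fderiv ℝ (fun y => f y i) x v := by
  have h := (PiLp.hasFDerivAt_apply (𝕜 := ℝ) 2 (f x) i).comp x hf.hasFDerivAt
  rw [show (fun y => f y i) = (fun g : EuclideanSpace ℝ ι => g i) ∘ f from rfl, h.fderiv]
  rfl

theorem graph_ne_zero {α β γ : Type*} [Zero α] [Zero β] [Zero γ] {f : α → β → γ}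
    (hf : f 0 0 ≠ 0) (a : α) (b : β) : (a, b, f a b) ≠ 0 := by
  intro h
  simp only [Prod.mk_eq_zero] at h
  obtain ⟨ha, hb, h⟩ := h
  rw [ha, hb] at h
  exact hf h

section

variable {℘ : ℝ → ℝ → ℝ} {ς : ℝ}

theorem immersionMap_injective (h℘0 : ℘ 0 0 ≠ 0) : Function.Injective (immersionMap ℘ ς) := by
  intro a b hab
  have hcoord (i : Fin 5) := congrArg (· i) hab
  simp only [immersionMap, WithLp.equiv_symm_apply] at hcoord
  have h0 : a 0 = b 0 := by simpa using hcoord 0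
  have h1 : a 1 = b 1 := by simpa using hcoord 1
  have h2 : b 0 * a 2 = b 0 * b 2 := by simpa [h0] using hcoord 2
  have h3 : b 1 * a 2 = b 1 * b 2 := by simpa [h1] using hcoord 3
  have h4 : ℘ (b 0) (b 1) * (a 2 - ς) = ℘ (b 0) (b 1) * (b 2 - ς) := by
    simpa [h0, h1] using hcoord 4
  have hsmul : (a 2 - b 2) • (a 0, a 1, ℘ (a 0) (a 1)) = 0 := by
    simp only [h0, h1, Prod.smul_mk, smul_eq_mul, Prod.mk_eq_zero]
    exact ⟨by linear_combination h2, by linear_combination h3, by linear_combination h4⟩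
  have ht := sub_eq_zero.1 ((smul_eq_zero.1 hsmul).resolve_right (graph_ne_zero h℘0 _ _))
  ext i
  fin_cases i <;> assumption

theorem fderiv_immersionMap_apply {x : EuclideanSpace ℝ (Fin 3)}
    (h℘ : DifferentiableAt ℝ (fun p : ℝ × ℝ => ℘ p.1 p.2) (x 0, x 1))
    (v : EuclideanSpace ℝ (Fin 3)) :
    fderiv ℝ (immersionMap ℘ ς) x v = (WithLp.equiv 2 (Fin 5 → ℝ)).symm
      ![v 0, v 1, -(x 0 * v 2 + x 2 * v 0), -(x 1 * v 2 + x 2 * v 1),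
        ℘ (x 0) (x 1) * v 2 +
          (x 2 - ς) * fderiv ℝ (fun p : ℝ × ℝ => ℘ p.1 p.2) (x 0, x 1) (v 0, v 1)] := by
  have hc (i : Fin 3) := PiLp.hasFDerivAt_apply (𝕜 := ℝ) 2 x i
  have h℘' : HasFDerivAt (fun y : EuclideanSpace ℝ (Fin 3) => ℘ (y 0) (y 1)) _ x :=
    (h℘.hasFDerivAt.comp x ((hc 0).prodMk (hc 1)) :)
  have h2 := ((hc 0).fun_mul (hc 2)).fun_neg
  have h3 := ((hc 1).fun_mul (hc 2)).fun_neg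
  have h4 := h℘'.fun_mul ((hc 2).sub_const ς)
  have hd : DifferentiableAt ℝ (immersionMap ℘ ς) x := by
    refine differentiableAt_euclidean.2 fun i => ?_
    fin_cases i
    exacts [(hc 0).differentiableAt, (hc 1).differentiableAt, h2.differentiableAt,
      h3.differentiableAt, h4.differentiableAt]
  ext i
  rw [EuclideanSpace.fderiv_apply hd]
  fin_cases i
  · change fderiv ℝ (fun y : EuclideanSpace ℝ (Fin 3) => y 0) x v = _
    rw [(hc 0).fderiv]
    simp
  · change fderiv ℝ (fun y : EuclideanSpace ℝ (Fin 3) => y 1) x v = _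
    rw [(hc 1).fderiv]
    simp
  · change fderiv ℝ (fun y : EuclideanSpace ℝ (Fin 3) => -(y 0 * y 2)) x v = _
    rw [h2.fderiv]
    simp
  · change fderiv ℝ (fun y : EuclideanSpace ℝ (Fin 3) => -(y 1 * y 2)) x v = _
    rw [h3.fderiv]
    simp
  · change fderiv ℝ (fun y : EuclideanSpace ℝ (Fin 3) => ℘ (y 0) (y 1) * (y 2 - ς)) x v = _
    rw [h4.fderiv]
    simp

theorem injective_fderiv_immersionMap {x : EuclideanSpace ℝ (Fin 3)}
    (h℘ : DifferentiableAt ℝ (fun p : ℝ × ℝ => ℘ p.1 p.2) (x 0, x 1)) (h℘0 : ℘ 0 0 ≠ 0) :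
    Function.Injective (fderiv ℝ (immersionMap ℘ ς) x) := by
  refine (injective_iff_map_eq_zero _).2 fun v hv => ?_
  have hcoord (i : Fin 5) := congrArg (· i) hv
  simp only [fderiv_immersionMap_apply h℘, WithLp.equiv_symm_apply] at hcoord
  have h0 : v 0 = 0 := by simpa using hcoord 0
  have h1 : v 1 = 0 := by simpa using hcoord 1
  have h2 : x 0 * v 2 = 0 := by simpa [h0, h1] using hcoord 2
  have h3 : x 1 * v 2 = 0 := by simpa [h0, h1] using hcoord 3
  have h4 : ℘ (x 0) (x 1) * v 2 = 0 := by simpa [h0, h1, ← Prod.zero_eq_mk] using hcoord 4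
  have hsmul : v 2 • (x 0, x 1, ℘ (x 0) (x 1)) = 0 := by
    simp only [Prod.smul_mk, smul_eq_mul, mul_comm (v 2), h2, h3, h4, Prod.mk_zero_zero]
  have ht := (smul_eq_zero.1 hsmul).resolve_right (graph_ne_zero h℘0 _ _)
  ext i
  fin_cases i <;> assumption

end

theorem stmt_16_general (℘ : ℝ → ℝ → ℝ)
    (h℘C : ContDiff ℝ 1 (fun p : ℝ × ℝ => ℘ p.1 p.2))
    (h℘pos : ∀ x₁ x₂, x₁ = 0 → x₂ = 0 → 0 < ℘ x₁ x₂)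
    (ς : ℝ) :
    let φ : EuclideanSpace ℝ (Fin 3) → EuclideanSpace ℝ (Fin 5) :=
      fun x => (WithLp.equiv 2 (Fin 5 → ℝ)).symm
        ![x 0, x 1, -(x 0 * x 2), -(x 1 * x 2), ℘ (x 0) (x 1) * (x 2 - ς)]
    Function.Injective φ ∧ ∀ x, Function.Injective (fderiv ℝ φ x) := by
  have h℘0 : ℘ 0 0 ≠ 0 := (h℘pos 0 0 rfl rfl).ne'
  exact ⟨immersionMap_injective h℘0, fun x =>
    injective_fderiv_immersionMap (h℘C.differentiable one_ne_zero _) h℘0⟩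

/-- With ℘ nonnegative, C¹, and positive at the origin, the map
φ(x) = (x₁, x₂, −x₁x₃, −x₂x₃, ℘(x₁,x₂)(x₃−ς)) is an injective immersion on all of
ℝ³: it is injective and its Jacobian has full rank 3 everywhere. -/
theorem stmt_16 (℘ : ℝ → ℝ → ℝ)
    (h℘C : ContDiff ℝ 1 (fun p : ℝ × ℝ => ℘ p.1 p.2))
    (h℘nn : ∀ x₁ x₂, 0 ≤ ℘ x₁ x₂)
    (h℘pos : ∀ x₁ x₂, x₁ = 0 → x₂ = 0 → 0 < ℘ x₁ x₂)
    (ς : ℝ) :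
    let φ : EuclideanSpace ℝ (Fin 3) → EuclideanSpace ℝ (Fin 5) :=
      fun x => (WithLp.equiv 2 (Fin 5 → ℝ)).symm
        ![x 0, x 1, -(x 0 * x 2), -(x 1 * x 2), ℘ (x 0) (x 1) * (x 2 - ς)]
    Function.Injective φ ∧ ∀ x, Function.Injective (fderiv ℝ φ x) :=
  stmt_16_general ℘ h℘C h℘pos ς
end

section
/- Let ℘ : ℝ² → ℝ be C¹ with x₁² + x₂² + ℘(x₁,x₂)² > 0 for all (x₁,x₂), and ς ∈ ℝ. Define ψ : ℝ⁶ → ℝ⁶ by ψ(x₁,x₂,x₃,w₁,w₂,w₃) = (x₁, x₂, −x₁x₃+x₂w₁−℘w₂, −x₂x₃−x₁w₁−℘w₃, ℘(x₃−ς)−x₁w₂−x₂w₃, ℘w₁+x₂w₂−x₁w₃) where ℘ = ℘(x₁,x₂). Then the Jacobian of ψ has determinant (x₁²+x₂²+℘(x₁,x₂)²)², hence nonzero everywhere, and ψ is a bijective diffeomorphism from ℝ⁶ onto ℝ⁶. -/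
/-!
On the fibre coordinates `y = (x₃, w₁, w₂, w₃)` the map is affine, `y ↦ M y + c` with
`c = (0, 0, -p ς, 0)` and `M = [[-a, b, -p, 0], [-b, -a, 0, -p], [p, 0, -a, -b], [0, p, b, -a]]`,
where `a = x₁`, `b = x₂`, `p = ℘(x₁, x₂)`. The columns of `M` are orthogonal of squared length
`N = a² + b² + p² > 0`, so `Mᵀ M = N • 1` and the value `η` of the last four coordinates determines
`y = N⁻¹ Mᵀ (η - c)`, a C¹ function of the value. The Jacobian is block lower triangular with diagonal blocks `1` and
`M`, so its determinant is `det M = N²`.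
-/

section

variable {𝕜 E F : Type*} [NontriviallyNormedField 𝕜] [NormedAddCommGroup E] [NormedSpace 𝕜 E]
  [NormedAddCommGroup F] [NormedSpace 𝕜 F]

theorem fderiv_apply_eq_of_add_smul {f : E → F} {x v : E} {w : F} (hf : DifferentiableAt 𝕜 f x)
    (hline : ∀ t : 𝕜, f (x + t • v) = f x + t • w) : fderiv 𝕜 f x v = w := by
  rw [← hf.lineDeriv_eq_fderiv, lineDeriv, funext hline]
  simpa using ((hasDerivAt_id (0 : 𝕜)).smul_const w).deriv

theorem fderiv_apply_apply_of_apply_eq {ι : Type*} [Fintype ι] {p : ENNReal} [Fact (1 ≤ p)]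
    {β : ι → Type*} [∀ i, NormedAddCommGroup (β i)] [∀ i, NormedSpace 𝕜 (β i)]
    {f : E → PiLp p β} {i : ι} {g : E →L[𝕜] β i} {x : E} (hf : DifferentiableAt 𝕜 f x)
    (hfi : ∀ y, f y i = g y) (v : E) : fderiv 𝕜 f x v i = g v := by
  have h := (PiLp.proj p β i).hasFDerivAt.comp x hf.hasFDerivAt
  rw [show (PiLp.proj p β i : PiLp p β →L[𝕜] β i) ∘ f = g from funext hfi] at h
  simpa using congrArg (· v) (h.unique g.hasFDerivAt)

end

theorem det_lowerBlockTriangular_quaternion (a b p c₂₀ c₂₁ c₃₀ c₃₁ c₄₀ c₄₁ c₅₀ c₅₁ : ℝ) :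
    Matrix.det !![1, 0, 0, 0, 0, 0; 0, 1, 0, 0, 0, 0;
      c₂₀, c₂₁, -a, b, -p, 0; c₃₀, c₃₁, -b, -a, 0, -p;
      c₄₀, c₄₁, p, 0, -a, -b; c₅₀, c₅₁, 0, p, b, -a] = (a ^ 2 + b ^ 2 + p ^ 2) ^ 2 := by
  have e₁ : Fin.succAbove (1 : Fin 4) 2 = 3 := rfl
  have e₂ : Fin.succAbove (2 : Fin 4) 2 = 3 := rfl
  simp [Matrix.det_succ_row_zero, Fin.sum_univ_succ, e₁, e₂]
  ring

noncomputable def augmentedMap (℘ : ℝ → ℝ → ℝ) (ς : ℝ) (x : EuclideanSpace ℝ (Fin 6)) :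
    EuclideanSpace ℝ (Fin 6) :=
  (WithLp.equiv 2 (Fin 6 → ℝ)).symm
    ![x 0, x 1,
      -(x 0 * x 2) + x 1 * x 3 - ℘ (x 0) (x 1) * x 4,
      -(x 1 * x 2) - x 0 * x 3 - ℘ (x 0) (x 1) * x 5,
      ℘ (x 0) (x 1) * (x 2 - ς) - x 0 * x 4 - x 1 * x 5,
      ℘ (x 0) (x 1) * x 3 + x 1 * x 4 - x 0 * x 5]

noncomputable def augmentedMapInv (℘ : ℝ → ℝ → ℝ) (ς : ℝ) (ξ : EuclideanSpace ℝ (Fin 6)) :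
    EuclideanSpace ℝ (Fin 6) :=
  let p := ℘ (ξ 0) (ξ 1)
  let N := ξ 0 ^ 2 + ξ 1 ^ 2 + p ^ 2
  let η := ξ 4 + p * ς
  (WithLp.equiv 2 (Fin 6 → ℝ)).symm
    ![ξ 0, ξ 1,
      (-(ξ 0 * ξ 2) - ξ 1 * ξ 3 + p * η) / N,
      (ξ 1 * ξ 2 - ξ 0 * ξ 3 + p * ξ 5) / N,
      (-(p * ξ 2) - ξ 0 * η + ξ 1 * ξ 5) / N,
      (-(p * ξ 3) - ξ 1 * η - ξ 0 * ξ 5) / N]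

section

variable {℘ : ℝ → ℝ → ℝ} {ς : ℝ}

theorem augmentedMapInv_augmentedMap (h℘ : ∀ a b, a ^ 2 + b ^ 2 + ℘ a b ^ 2 ≠ 0) :
    Function.LeftInverse (augmentedMapInv ℘ ς) (augmentedMap ℘ ς) := by
  intro x
  have := h℘ (x 0) (x 1)
  ext i
  fin_cases i <;> simp [augmentedMap, augmentedMapInv] <;> field_simp <;> ring

theorem augmentedMap_augmentedMapInv (h℘ : ∀ a b, a ^ 2 + b ^ 2 + ℘ a b ^ 2 ≠ 0) :
    Function.RightInverse (augmentedMapInv ℘ ς) (augmentedMap ℘ ς) := by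
  intro ξ
  have := h℘ (ξ 0) (ξ 1)
  ext i
  fin_cases i <;> simp [augmentedMap, augmentedMapInv] <;> field_simp <;> ring

variable {n : WithTop ℕ∞}

theorem contDiff_apply_zero_apply_one (h℘ : ContDiff ℝ n (fun p : ℝ × ℝ => ℘ p.1 p.2)) :
    ContDiff ℝ n (fun x : EuclideanSpace ℝ (Fin 6) => ℘ (x 0) (x 1)) :=
  h℘.comp (f := fun x : EuclideanSpace ℝ (Fin 6) => (x 0, x 1)) (by fun_prop)

theorem contDiff_augmentedMap (h℘ : ContDiff ℝ n (fun p : ℝ × ℝ => ℘ p.1 p.2)) :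
    ContDiff ℝ n (augmentedMap ℘ ς) := by
  have := contDiff_apply_zero_apply_one h℘
  rw [contDiff_euclidean]
  intro i
  fin_cases i <;> simp [augmentedMap] <;> fun_prop

theorem contDiff_augmentedMapInv (h℘ : ContDiff ℝ n (fun p : ℝ × ℝ => ℘ p.1 p.2))
    (hN : ∀ a b, a ^ 2 + b ^ 2 + ℘ a b ^ 2 ≠ 0) : ContDiff ℝ n (augmentedMapInv ℘ ς) := by
  have := contDiff_apply_zero_apply_one h℘
  rw [contDiff_euclidean]
  intro i
  fin_cases i <;> simp [augmentedMapInv] <;> fun_prop (disch := exact fun x => hN _ _)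

theorem augmentedMap_add_smul (x v : EuclideanSpace ℝ (Fin 6)) (hv₀ : v 0 = 0) (hv₁ : v 1 = 0)
    (t : ℝ) :
    augmentedMap ℘ ς (x + t • v) = augmentedMap ℘ ς x + t • (WithLp.equiv 2 (Fin 6 → ℝ)).symm
      ![0, 0, -(x 0 * v 2) + x 1 * v 3 - ℘ (x 0) (x 1) * v 4,
        -(x 1 * v 2) - x 0 * v 3 - ℘ (x 0) (x 1) * v 5,
        ℘ (x 0) (x 1) * v 2 - x 0 * v 4 - x 1 * v 5,
        ℘ (x 0) (x 1) * v 3 + x 1 * v 4 - x 0 * v 5] := by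
  ext i
  fin_cases i <;> simp [augmentedMap, hv₀, hv₁] <;> ring

theorem det_fderiv_augmentedMap {x : EuclideanSpace ℝ (Fin 6)}
    (hψ : DifferentiableAt ℝ (augmentedMap ℘ ς) x) :
    LinearMap.det (fderiv ℝ (augmentedMap ℘ ς) x :
        EuclideanSpace ℝ (Fin 6) →ₗ[ℝ] EuclideanSpace ℝ (Fin 6))
      = (x 0 ^ 2 + x 1 ^ 2 + ℘ (x 0) (x 1) ^ 2) ^ 2 := by
  set b := (EuclideanSpace.basisFun (Fin 6) ℝ).toBasis
  rw [← LinearMap.det_toMatrix b]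
  obtain ⟨J, hJ⟩ : ∃ J, LinearMap.toMatrix b b (fderiv ℝ (augmentedMap ℘ ς) x : _ →ₗ[ℝ] _) = J :=
    ⟨_, rfl⟩
  have hentry (i j : Fin 6) :
      J i j = fderiv ℝ (augmentedMap ℘ ς) x (EuclideanSpace.single j 1) i := by
    simp [← hJ, b, LinearMap.toMatrix_apply]
  have hrow₀ := fderiv_apply_apply_of_apply_eq hψ (i := 0) (g := PiLp.proj 2 _ 0) fun _ => rfl
  have hrow₁ := fderiv_apply_apply_of_apply_eq hψ (i := 1) (g := PiLp.proj 2 _ 1) fun _ => rfl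
  have hcol (j : Fin 6) (hj : 2 ≤ j) := fderiv_apply_eq_of_add_smul hψ
    (augmentedMap_add_smul (℘ := ℘) (ς := ς) x (EuclideanSpace.single j 1)
      (by fin_cases j <;> simp_all) (by fin_cases j <;> simp_all))
  have hJ_eq : J = !![1, 0, 0, 0, 0, 0; 0, 1, 0, 0, 0, 0;
      J 2 0, J 2 1, -x 0, x 1, -℘ (x 0) (x 1), 0; J 3 0, J 3 1, -x 1, -x 0, 0, -℘ (x 0) (x 1);
      J 4 0, J 4 1, ℘ (x 0) (x 1), 0, -x 0, -x 1; J 5 0, J 5 1, 0, ℘ (x 0) (x 1), x 1, -x 0] := by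
    rw [← Matrix.ext_iff]
    simp only [Fin.forall_fin_succ, IsEmpty.forall_iff, and_true, Fin.succ_zero_eq_one,
      Fin.succ_one_eq_two, Fin.reduceSucc]
    simp [hentry, hrow₀, hrow₁, hcol 2 (by decide), hcol 3 (by decide), hcol 4 (by decide),
      hcol 5 (by decide)]
  rw [hJ, hJ_eq, det_lowerBlockTriangular_quaternion]

end

/-- The augmented map ψ on ℝ⁶ has Jacobian determinant
(x₁² + x₂² + ℘(x₁,x₂)²)², hence nonzero everywhere, and ψ is a bijective
diffeomorphism from ℝ⁶ onto ℝ⁶. -/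
theorem stmt_17 (℘ : ℝ → ℝ → ℝ)
    (h℘C : ContDiff ℝ 1 (fun p : ℝ × ℝ => ℘ p.1 p.2))
    (h℘pos : ∀ x₁ x₂, 0 < x₁ ^ 2 + x₂ ^ 2 + (℘ x₁ x₂) ^ 2)
    (ς : ℝ) :
    let ψ : EuclideanSpace ℝ (Fin 6) → EuclideanSpace ℝ (Fin 6) :=
      fun x => (WithLp.equiv 2 (Fin 6 → ℝ)).symm
        ![x 0, x 1,
          -(x 0 * x 2) + x 1 * x 3 - ℘ (x 0) (x 1) * x 4,
          -(x 1 * x 2) - x 0 * x 3 - ℘ (x 0) (x 1) * x 5,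
          ℘ (x 0) (x 1) * (x 2 - ς) - x 0 * x 4 - x 1 * x 5,
          ℘ (x 0) (x 1) * x 3 + x 1 * x 4 - x 0 * x 5]
    (∀ x, LinearMap.det ((fderiv ℝ ψ x : _) :
        EuclideanSpace ℝ (Fin 6) →ₗ[ℝ] EuclideanSpace ℝ (Fin 6))
      = ((x 0) ^ 2 + (x 1) ^ 2 + (℘ (x 0) (x 1)) ^ 2) ^ 2) ∧
    Function.Bijective ψ ∧
    ∃ g : EuclideanSpace ℝ (Fin 6) → EuclideanSpace ℝ (Fin 6),
      ContDiff ℝ 1 g ∧ Function.LeftInverse g ψ ∧ Function.RightInverse g ψ := by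
  intro ψ
  have hN : ∀ a b, a ^ 2 + b ^ 2 + ℘ a b ^ 2 ≠ 0 := fun a b => (h℘pos a b).ne'
  have hleft := augmentedMapInv_augmentedMap (ς := ς) hN
  have hright := augmentedMap_augmentedMapInv (ς := ς) hN
  have hψ := (contDiff_augmentedMap (ς := ς) h℘C).differentiable one_ne_zero
  exact ⟨fun x => det_fderiv_augmentedMap (hψ x), ⟨hleft.injective, hright.surjective⟩,
    augmentedMapInv ℘ ς, contDiff_augmentedMapInv h℘C hN, hleft, hright⟩
end

section
/- The set 𝒪 = {(x₁,x₂) ∈ ℝ² : x₁ > ε₁ and x₂ > −a₂x₁}, with ε₁ > 0 and a₂ > 0, is mapped by φ(x₁,x₂) = (x₁, a₁x₁x₂/(a₂x₁+x₂)) (a₁ > 0) diffeomorphically onto {(ξ₁,ξ₂) : ξ₁ > ε₁ and a₁ξ₁ > ξ₂}; in particular φ is injective on 𝒪 with C¹ inverse. -/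
/-!
Both maps fix the first coordinate, and the second coordinates of φ and of its candidate inverse
ψ(ξ) = (ξ₁, a₂ξ₁ξ₂/(a₁ξ₁ − ξ₂)) satisfy
  a₁x₁ − φ₂(x) = a₁a₂x₁² / (a₂x₁ + x₂)   and   a₂ξ₁ + ψ₂(ξ) = a₁a₂ξ₁² / (a₁ξ₁ − ξ₂).
The first identity shows that φ maps 𝒪 into T, the second that ψ maps T into 𝒪, and substituting
each into the other shows that φ and ψ are mutually inverse.
-/

open Set

namespace Bioreactor

variable (a₁ a₂ ε : ℝ)

def domain : Set (ℝ × ℝ) := {x | ε < x.1 ∧ -a₂ * x.1 < x.2}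

def target : Set (ℝ × ℝ) := {ξ | ε < ξ.1 ∧ ξ.2 < a₁ * ξ.1}

noncomputable def toTarget (x : ℝ × ℝ) : ℝ × ℝ := (x.1, a₁ * x.1 * x.2 / (a₂ * x.1 + x.2))

noncomputable def toDomain (ξ : ℝ × ℝ) : ℝ × ℝ := (ξ.1, a₂ * ξ.1 * ξ.2 / (a₁ * ξ.1 - ξ.2))

lemma toTarget_fst (x : ℝ × ℝ) : (toTarget a₁ a₂ x).1 = x.1 := rfl

lemma toDomain_fst (ξ : ℝ × ℝ) : (toDomain a₁ a₂ ξ).1 = ξ.1 := rfl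

variable {a₁ a₂ ε}

lemma sub_toTarget_snd {x : ℝ × ℝ} (hx : a₂ * x.1 + x.2 ≠ 0) :
    a₁ * x.1 - (toTarget a₁ a₂ x).2 = a₁ * a₂ * x.1 ^ 2 / (a₂ * x.1 + x.2) := by
  rw [toTarget, eq_div_iff hx, sub_mul, div_mul_cancel₀ _ hx]
  ring

lemma add_toDomain_snd {ξ : ℝ × ℝ} (hξ : a₁ * ξ.1 - ξ.2 ≠ 0) :
    a₂ * ξ.1 + (toDomain a₁ a₂ ξ).2 = a₁ * a₂ * ξ.1 ^ 2 / (a₁ * ξ.1 - ξ.2) := by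
  rw [toDomain, eq_div_iff hξ, add_mul, div_mul_cancel₀ _ hξ]
  ring

lemma denom_pos_of_mem_domain {x : ℝ × ℝ} (hx : x ∈ domain a₂ ε) : 0 < a₂ * x.1 + x.2 := by
  linarith [hx.2]

lemma denom_pos_of_mem_target {ξ : ℝ × ℝ} (hξ : ξ ∈ target a₁ ε) : 0 < a₁ * ξ.1 - ξ.2 := by
  linarith [hξ.2]

section

variable (ha₁ : 0 < a₁) (ha₂ : 0 < a₂) (hε : 0 ≤ ε)
include ha₁ ha₂ hε

lemma mapsTo_toTarget : MapsTo (toTarget a₁ a₂) (domain a₂ ε) (target a₁ ε) := by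
  intro x hx
  have hx₁ : 0 < x.1 := hε.trans_lt hx.1
  have hd := denom_pos_of_mem_domain hx
  have hgap : 0 < a₁ * x.1 - (toTarget a₁ a₂ x).2 := by
    rw [sub_toTarget_snd hd.ne']
    positivity
  exact ⟨hx.1, by rw [toTarget_fst]; linarith⟩

lemma mapsTo_toDomain : MapsTo (toDomain a₁ a₂) (target a₁ ε) (domain a₂ ε) := by
  intro ξ hξ
  have hξ₁ : 0 < ξ.1 := hε.trans_lt hξ.1
  have hs := denom_pos_of_mem_target hξ
  have hgap : 0 < a₂ * ξ.1 + (toDomain a₁ a₂ ξ).2 := by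
    rw [add_toDomain_snd hs.ne']
    positivity
  exact ⟨hξ.1, by rw [toDomain_fst]; linarith⟩

lemma leftInvOn_toDomain_toTarget :
    LeftInvOn (toDomain a₁ a₂) (toTarget a₁ a₂) (domain a₂ ε) := by
  intro x hx
  have hx₁ : 0 < x.1 := hε.trans_lt hx.1
  have hd := (denom_pos_of_mem_domain hx).ne'
  refine Prod.ext rfl ?_
  change a₂ * x.1 * (toTarget a₁ a₂ x).2 / (a₁ * x.1 - (toTarget a₁ a₂ x).2) = x.2
  rw [sub_toTarget_snd hd, toTarget]
  field_simp

lemma rightInvOn_toDomain_toTarget :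
    RightInvOn (toDomain a₁ a₂) (toTarget a₁ a₂) (target a₁ ε) := by
  intro ξ hξ
  have hξ₁ : 0 < ξ.1 := hε.trans_lt hξ.1
  have hs := (denom_pos_of_mem_target hξ).ne'
  refine Prod.ext rfl ?_
  change a₁ * ξ.1 * (toDomain a₁ a₂ ξ).2 / (a₂ * ξ.1 + (toDomain a₁ a₂ ξ).2) = ξ.2
  rw [add_toDomain_snd hs, toDomain]
  field_simp

lemma bijOn_toTarget : BijOn (toTarget a₁ a₂) (domain a₂ ε) (target a₁ ε) :=
  InvOn.bijOn ⟨leftInvOn_toDomain_toTarget ha₁ ha₂ hε, rightInvOn_toDomain_toTarget ha₁ ha₂ hε⟩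
    (mapsTo_toTarget ha₁ ha₂ hε) (mapsTo_toDomain ha₁ ha₂ hε)

end

lemma contDiffOn_toTarget {n : WithTop ℕ∞} :
    ContDiffOn ℝ n (toTarget a₁ a₂) {x | a₂ * x.1 + x.2 ≠ 0} :=
  contDiffOn_fst.prodMk <| ContDiffOn.div (by fun_prop) (by fun_prop) fun _ hx => hx

lemma contDiffOn_toDomain {n : WithTop ℕ∞} :
    ContDiffOn ℝ n (toDomain a₁ a₂) {ξ | a₁ * ξ.1 - ξ.2 ≠ 0} :=
  contDiffOn_fst.prodMk <| ContDiffOn.div (by fun_prop) (by fun_prop) fun _ hξ => hξ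

end Bioreactor

open Bioreactor in
/-- The bioreactor change of coordinates
φ(x₁,x₂) = (x₁, a₁x₁x₂/(a₂x₁+x₂)) maps 𝒪 = {x₁ > ε₁, x₂ > −a₂x₁} diffeomorphically
onto {ξ₁ > ε₁, a₁ξ₁ > ξ₂}. -/
theorem stmt_18 (a₁ a₂ ε₁ : ℝ) (ha₁ : 0 < a₁) (ha₂ : 0 < a₂) (hε₁ : 0 < ε₁) :
    let 𝒪 : Set (ℝ × ℝ) := {x | ε₁ < x.1 ∧ -a₂ * x.1 < x.2}
    let φ : ℝ × ℝ → ℝ × ℝ := fun x => (x.1, a₁ * x.1 * x.2 / (a₂ * x.1 + x.2))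
    let T : Set (ℝ × ℝ) := {ξ | ε₁ < ξ.1 ∧ ξ.2 < a₁ * ξ.1}
    φ '' 𝒪 = T ∧ Set.InjOn φ 𝒪 ∧ ContDiffOn ℝ 1 φ 𝒪 ∧
      ∃ g : ℝ × ℝ → ℝ × ℝ, ContDiffOn ℝ 1 g T ∧
        (∀ x ∈ 𝒪, g (φ x) = x) ∧ ∀ ξ ∈ T, φ (g ξ) = ξ := by
  intro 𝒪 φ T
  have hbij : BijOn φ 𝒪 T := bijOn_toTarget ha₁ ha₂ hε₁.le
  refine ⟨hbij.image_eq, hbij.injOn, ?_, toDomain a₁ a₂, ?_,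
    leftInvOn_toDomain_toTarget ha₁ ha₂ hε₁.le, rightInvOn_toDomain_toTarget ha₁ ha₂ hε₁.le⟩
  · exact contDiffOn_toTarget.mono fun x hx => (denom_pos_of_mem_domain hx).ne'
  · exact contDiffOn_toDomain.mono fun ξ hξ => (denom_pos_of_mem_target hξ).ne'
end
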